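/- Orthogonality of classical Laguerre polynomials with explicit norm: for k > -1 and nonnegative integers n ≠ n', ∫_0^∞ L_n^k(x)·L_{n'}^k(x)·x^k·e^{-x} dx = 0, and ∫_0^∞ (L_n^k(x))²·x^k·e^{-x} dx = Γ(n+k+1)/n!. -/

import Mathlib

/-!
Expand `L_n^k = ∑ cᵢ xⁱ`. Against the weight `x^k e^{-x}` the monomial `x^(i+m)` integrates to
`Γ(k+i+m+1)`, and `cᵢ Γ(k+i+m+1)` is `(-1)ⁱ (n choose i) Γ(k+n+1)/n!` times `(k+1+i)_m`, a monic
polynomial of degree `m` in `i`. The alternating binomial sum over `i` is therefore an `n`-th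
forward difference of that polynomial: it vanishes for `m < n` and equals `(-1)ⁿ n!` for `m = n`.
So `L_n^k` is orthogonal to every lower-degree monomial, and only the leading coefficient
`(-1)ⁿ/n!` of the other factor contributes to the norm.
-/

noncomputable def lag (n : ℕ) (k : ℝ) (x : ℝ) : ℝ :=
  ∑ i ∈ Finset.range (n + 1),
    (-1 : ℝ) ^ i * (∏ j ∈ Finset.range (n - i), (k + (i : ℝ) + 1 + (j : ℝ))) /
      (Nat.factorial (n - i) : ℝ) * x ^ i / (Nat.factorial i : ℝ)

noncomputable def xi (k : ℝ) (m : ℕ) (x : ℝ) : ℝ := lag m k (-x)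

open MeasureTheory

open Finset Polynomial Nat

theorem ascPochhammer_eval_eq_prod_range {R : Type*} [CommSemiring R] (n : ℕ) (r : R) :
    (ascPochhammer R n).eval r = ∏ j ∈ range n, (r + j) := by
  induction n with
  | zero => simp
  | succ n ih => rw [ascPochhammer_succ_eval, ih, prod_range_succ]

theorem Real.Gamma_add_nat_eq_ascPochhammer_mul {s : ℝ} (hs : 0 < s) (m : ℕ) :
    Real.Gamma (s + m) = (ascPochhammer ℝ m).eval s * Real.Gamma s := by
  induction m with
  | zero => simp
  | succ m ih =>
    rw [Nat.cast_succ, ← add_assoc, Real.Gamma_add_one (by positivity), ih,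
      ascPochhammer_succ_eval]
    ring

theorem sum_neg_one_pow_mul_choose_mul_eq_fwdDiff_iter {R : Type*} [CommRing R] (f : R → R)
    (n : ℕ) :
    ∑ i ∈ range (n + 1), (-1 : R) ^ i * n.choose i * f i =
      (-1) ^ n * (fwdDiff (1 : R))^[n] f 0 := by
  rw [fwdDiff_iter_eq_sum_shift, mul_sum]
  refine sum_congr rfl fun i hi => ?_
  obtain ⟨j, rfl⟩ := Nat.exists_eq_add_of_le (mem_range_succ_iff.mp hi)
  have hj : (-1 : R) ^ j * (-1) ^ j = 1 := by rw [← pow_add, ← two_mul, pow_mul]; simp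
  simp only [Nat.add_sub_cancel_left, zsmul_eq_mul, Int.cast_mul, Int.cast_pow, Int.cast_neg,
    Int.cast_one, Int.cast_natCast, zero_add, nsmul_eq_mul, mul_one]
  linear_combination (-(-1 : R) ^ i * (i + j).choose i * f i) * hj

theorem Polynomial.sum_neg_one_pow_mul_choose_mul_eval_of_natDegree_lt {R : Type*} [CommRing R]
    {P : R[X]} {n : ℕ} (hP : P.natDegree < n) :
    ∑ i ∈ range (n + 1), (-1 : R) ^ i * n.choose i * P.eval (i : R) = 0 := by
  rw [sum_neg_one_pow_mul_choose_mul_eq_fwdDiff_iter P.eval, fwdDiff_iter_eq_zero_of_degree_lt hP,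
    Pi.zero_apply, mul_zero]

theorem Polynomial.Monic.sum_neg_one_pow_mul_choose_mul_eval {R : Type*} [CommRing R]
    {P : R[X]} (hP : P.Monic) :
    ∑ i ∈ range (P.natDegree + 1), (-1 : R) ^ i * P.natDegree.choose i * P.eval (i : R) =
      (-1) ^ P.natDegree * P.natDegree ! := by
  rw [sum_neg_one_pow_mul_choose_mul_eq_fwdDiff_iter P.eval, fwdDiff_iter_degree_eq_factorial,
    hP.leadingCoeff]
  simp

noncomputable def lagCoeff (n : ℕ) (k : ℝ) (i : ℕ) : ℝ :=
  (-1) ^ i * (ascPochhammer ℝ (n - i)).eval (k + i + 1) / ((n - i)! * i !)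

theorem lag_eq_sum_lagCoeff_mul_pow (n : ℕ) (k x : ℝ) :
    lag n k x = ∑ i ∈ range (n + 1), lagCoeff n k i * x ^ i := by
  refine sum_congr rfl fun i _ => ?_
  rw [lagCoeff, ascPochhammer_eval_eq_prod_range]
  ring

theorem eqOn_pow_mul_rpow_mul_exp_neg (k : ℝ) (m : ℕ) :
    Set.EqOn (fun x : ℝ => x ^ m * x ^ k * Real.exp (-x))
      (fun x => Real.exp (-x) * x ^ (k + m + 1 - 1)) (Set.Ioi 0) := fun x hx => by
  simp only [add_sub_cancel_right, Real.rpow_add hx, Real.rpow_natCast]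
  ring

theorem integrableOn_pow_mul_rpow_mul_exp_neg {k : ℝ} (hk : -1 < k) (m : ℕ) :
    IntegrableOn (fun x : ℝ => x ^ m * x ^ k * Real.exp (-x)) (Set.Ioi 0) :=
  (Real.GammaIntegral_convergent (by linarith [m.cast_nonneg (α := ℝ)])).congr_fun
    (eqOn_pow_mul_rpow_mul_exp_neg k m).symm measurableSet_Ioi

theorem integral_pow_mul_rpow_mul_exp_neg {k : ℝ} (hk : -1 < k) (m : ℕ) :
    ∫ x in Set.Ioi (0 : ℝ), x ^ m * x ^ k * Real.exp (-x) = Real.Gamma (k + m + 1) := by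
  rw [Real.Gamma_eq_integral (by linarith [m.cast_nonneg (α := ℝ)])]
  exact setIntegral_congr_fun measurableSet_Ioi (eqOn_pow_mul_rpow_mul_exp_neg k m)

theorem integral_lag_mul_lag {k : ℝ} (hk : -1 < k) (n n' : ℕ) :
    ∫ x in Set.Ioi (0 : ℝ), lag n k x * lag n' k x * x ^ k * Real.exp (-x) =
      ∑ j ∈ range (n' + 1), lagCoeff n' k j *
        ∑ i ∈ range (n + 1), lagCoeff n k i * Real.Gamma (k + (i + j : ℕ) + 1) := by
  have hexpand : (fun x : ℝ => lag n k x * lag n' k x * x ^ k * Real.exp (-x)) = fun x =>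
      ∑ j ∈ range (n' + 1), ∑ i ∈ range (n + 1),
        lagCoeff n' k j * lagCoeff n k i * (x ^ (i + j) * x ^ k * Real.exp (-x)) := by
    ext x
    simp_rw [lag_eq_sum_lagCoeff_mul_pow, sum_mul_sum, sum_mul, pow_add]
    rw [sum_comm]
    exact sum_congr rfl fun _ _ => sum_congr rfl fun _ _ => by ring
  have hint (i j : ℕ) := (integrableOn_pow_mul_rpow_mul_exp_neg hk (i + j)).const_mul
    (lagCoeff n' k j * lagCoeff n k i)
  rw [hexpand, integral_finsetSum _ fun j _ => integrable_finsetSum _ fun i _ => hint i j]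
  refine sum_congr rfl fun j _ => ?_
  rw [integral_finsetSum _ fun i _ => hint i j, mul_sum]
  refine sum_congr rfl fun i _ => ?_
  rw [integral_const_mul, integral_pow_mul_rpow_mul_exp_neg hk, mul_assoc]

theorem natDegree_ascPochhammer_comp_X_add_C {R : Type*} [CommRing R] [IsDomain R] (m : ℕ)
    (a : R) :
    ((ascPochhammer R m).comp (X + C a)).natDegree = m := by
  rw [natDegree_comp, ascPochhammer_natDegree, natDegree_X_add_C, mul_one]

theorem lagCoeff_mul_Gamma {k : ℝ} (hk : -1 < k) {n i : ℕ} (hi : i ≤ n) (m : ℕ) :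
    lagCoeff n k i * Real.Gamma (k + (i + m : ℕ) + 1) = Real.Gamma (k + n + 1) / n ! *
      ((-1) ^ i * n.choose i * ((ascPochhammer ℝ m).comp (X + C (k + 1))).eval (i : ℝ)) := by
  have hs : 0 < k + i + 1 := by linarith [i.cast_nonneg (α := ℝ)]
  have hGm : Real.Gamma (k + (i + m : ℕ) + 1) =
      (ascPochhammer ℝ m).eval (k + i + 1) * Real.Gamma (k + i + 1) := by
    rw [← Real.Gamma_add_nat_eq_ascPochhammer_mul hs]
    push_cast
    ring_nf
  have hGn : Real.Gamma (k + n + 1) =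
      (ascPochhammer ℝ (n - i)).eval (k + i + 1) * Real.Gamma (k + i + 1) := by
    rw [← Real.Gamma_add_nat_eq_ascPochhammer_mul hs, Nat.cast_sub hi]
    ring_nf
  have hchoose : (n.choose i : ℝ) * i ! * (n - i)! = n ! := by
    exact_mod_cast Nat.choose_mul_factorial_mul_factorial hi
  rw [eval_comp, eval_add, eval_X, eval_C, hGm, hGn, lagCoeff, ← hchoose,
    show (i : ℝ) + (k + 1) = k + i + 1 by ring]
  have hchoose_ne : (n.choose i : ℝ) ≠ 0 := by exact_mod_cast (Nat.choose_pos hi).ne'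
  field_simp

theorem sum_lagCoeff_mul_Gamma {k : ℝ} (hk : -1 < k) (n m : ℕ) :
    ∑ i ∈ range (n + 1), lagCoeff n k i * Real.Gamma (k + (i + m : ℕ) + 1) =
      Real.Gamma (k + n + 1) / n ! * ∑ i ∈ range (n + 1),
        (-1) ^ i * n.choose i * ((ascPochhammer ℝ m).comp (X + C (k + 1))).eval (i : ℝ) := by
  rw [mul_sum]
  exact sum_congr rfl fun i hi => lagCoeff_mul_Gamma hk (mem_range_succ_iff.mp hi) m

theorem sum_lagCoeff_mul_Gamma_of_lt {k : ℝ} (hk : -1 < k) {n m : ℕ} (h : m < n) :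
    ∑ i ∈ range (n + 1), lagCoeff n k i * Real.Gamma (k + (i + m : ℕ) + 1) = 0 := by
  rw [sum_lagCoeff_mul_Gamma hk, sum_neg_one_pow_mul_choose_mul_eval_of_natDegree_lt, mul_zero]
  rwa [natDegree_ascPochhammer_comp_X_add_C]

theorem sum_lagCoeff_mul_Gamma_self {k : ℝ} (hk : -1 < k) (n : ℕ) :
    ∑ i ∈ range (n + 1), lagCoeff n k i * Real.Gamma (k + (i + n : ℕ) + 1) =
      (-1) ^ n * Real.Gamma (k + n + 1) := by
  have hmonic :=
    ((monic_ascPochhammer ℝ n).comp_X_add_C (k + 1)).sum_neg_one_pow_mul_choose_mul_eval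
  rw [natDegree_ascPochhammer_comp_X_add_C] at hmonic
  rw [sum_lagCoeff_mul_Gamma hk, hmonic]
  field_simp

theorem integral_lag_mul_lag_of_lt {k : ℝ} (hk : -1 < k) {n n' : ℕ} (h : n' < n) :
    ∫ x in Set.Ioi (0 : ℝ), lag n k x * lag n' k x * x ^ k * Real.exp (-x) = 0 := by
  rw [integral_lag_mul_lag hk]
  refine sum_eq_zero fun j hj => ?_
  rw [sum_lagCoeff_mul_Gamma_of_lt hk (by have := mem_range.mp hj; omega), mul_zero]

theorem integral_lag_mul_self {k : ℝ} (hk : -1 < k) (n : ℕ) :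
    ∫ x in Set.Ioi (0 : ℝ), lag n k x * lag n k x * x ^ k * Real.exp (-x) =
      Real.Gamma (k + n + 1) / n ! := by
  rw [integral_lag_mul_lag hk, sum_range_succ, sum_eq_zero fun j hj => ?_, zero_add,
    sum_lagCoeff_mul_Gamma_self hk, lagCoeff]
  · simp only [Nat.sub_self, ascPochhammer_zero, eval_one, Nat.factorial_zero, Nat.cast_one,
      mul_one, one_mul]
    rw [div_mul_eq_mul_div, ← mul_assoc, ← mul_pow, neg_one_mul, neg_neg, one_pow, one_mul]
  · rw [sum_lagCoeff_mul_Gamma_of_lt hk (mem_range.mp hj), mul_zero]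

/-- Orthogonality of the classical Laguerre polynomials with explicit norm. -/
theorem laguerre_orthogonality (k : ℝ) (hk : -1 < k) (n n' : ℕ) (hnn : n ≠ n') :
    (∫ x in Set.Ioi (0 : ℝ),
        lag n k x * lag n' k x * Real.rpow x k * Real.exp (-x) = 0) ∧
    (∫ x in Set.Ioi (0 : ℝ),
        (lag n k x) ^ 2 * Real.rpow x k * Real.exp (-x)
          = Real.Gamma ((n : ℝ) + k + 1) / (Nat.factorial n : ℝ)) := by
  simp only [Real.rpow_eq_pow, sq]
  refine ⟨?_, by rw [integral_lag_mul_self hk, add_comm k]⟩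
  rcases hnn.lt_or_gt with h | h
  · simp_rw [mul_comm (lag n k _) (lag n' k _)]
    exact integral_lag_mul_lag_of_lt hk h
  · exact integral_lag_mul_lag_of_lt hk h
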